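/- Let C be a bounded filtered chain complex. Then for each p and q and all sufficiently large r (depending on the filtration bounds), the page E^r_{p,q} is canonically isomorphic to F_p(H_{p+q}(C)) / F_{p-1}(H_{p+q}(C)), where F_p(H(C)) = im(H(F_p C) → H(C)). -/

import Mathlib

/- A filtered chain complex is modelled as an abelian group `C` with a grading
`deg : ℤ → AddSubgroup C` (internal direct sum `C = ⊕ C_k`), a degree `-1` differential `d`
with `d ∘ d = 0`, and a monotone, `d`-invariant filtration `F`. -/

/-- `Z^r_{p,q} = F_p C_{p+q} ∩ ∂⁻¹(F_{p-r} C_{p+q-1})`. -/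
def Zgrp {C : Type*} [AddCommGroup C] (d : C →+ C) (F deg : ℤ → AddSubgroup C)
    (r p q : ℤ) : AddSubgroup C :=
  F p ⊓ deg (p + q) ⊓ (F (p - r)).comap d

/-- `B^r_{p,q} = F_p C_{p+q} ∩ ∂(F_{p+r} C_{p+q+1})`. -/
def Bgrp {C : Type*} [AddCommGroup C] (d : C →+ C) (F deg : ℤ → AddSubgroup C)
    (r p q : ℤ) : AddSubgroup C :=
  F p ⊓ deg (p + q) ⊓ (F (p + r) ⊓ deg (p + q + 1)).map d

/-- `E^r_{p,q} = Z^r_{p,q} / (Z^{r-1}_{p-1,q+1} + B^{r-1}_{p,q})`. -/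
abbrev Epage {C : Type*} [AddCommGroup C] (d : C →+ C) (F deg : ℤ → AddSubgroup C)
    (r p q : ℤ) :=
  Zgrp d F deg r p q ⧸
    ((Zgrp d F deg (r - 1) (p - 1) (q + 1) ⊔ Bgrp d F deg (r - 1) p q).addSubgroupOf
      (Zgrp d F deg r p q))

/-- The cycles in homological degree `k`. -/
def cyc {C : Type*} [AddCommGroup C] (d : C →+ C) (deg : ℤ → AddSubgroup C) (k : ℤ) :
    AddSubgroup C := d.ker ⊓ deg k

/-- The boundaries in degree `k`, viewed inside the degree-`k` cycles. -/
def bdryIn {C : Type*} [AddCommGroup C] (d : C →+ C) (deg : ℤ → AddSubgroup C) (k : ℤ) :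
    AddSubgroup (cyc d deg k) := ((deg (k + 1)).map d).addSubgroupOf (cyc d deg k)

/-- The homology `H_k(C)`. -/
abbrev Hk {C : Type*} [AddCommGroup C] (d : C →+ C) (deg : ℤ → AddSubgroup C) (k : ℤ) :=
  cyc d deg k ⧸ bdryIn d deg k

/-- Projection from degree-`k` cycles to `H_k(C)`. -/
def projHk {C : Type*} [AddCommGroup C] (d : C →+ C) (deg : ℤ → AddSubgroup C) (k : ℤ) :
    cyc d deg k →+ Hk d deg k := QuotientAddGroup.mk' (bdryIn d deg k)

/-- The induced filtration `F_p(H_k(C)) = im(H_k(F_p C) → H_k(C))`. -/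
def FHk {C : Type*} [AddCommGroup C] (d : C →+ C) (F deg : ℤ → AddSubgroup C) (p k : ℤ) :
    AddSubgroup (Hk d deg k) :=
  ((F p).addSubgroupOf (cyc d deg k)).map (projHk d deg k)

/-!
Once `F_{p-r} = 0` and `F_{p+r-1} = C`, the group `Z^r_{p,q}` consists of the cycles in
`F_p C_{p+q}`, `Z^{r-1}_{p-1,q+1}` of the cycles in `F_{p-1} C_{p+q}`, and `B^{r-1}_{p,q}` of the
boundaries lying in `F_p C_{p+q}`. Taking homology classes maps `Z^r_{p,q}` onto
`F_p H / F_{p-1} H`, and a cycle `x` is killed iff `x - y` is a boundary for some cycle `y` in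
`F_{p-1}`, i.e. iff `x ∈ Z^{r-1}_{p-1,q+1} + B^{r-1}_{p,q}`. The first isomorphism theorem
identifies the page.
-/

section

variable {C : Type*} [AddCommGroup C] (d : C →+ C) (F deg : ℤ → AddSubgroup C) {r p q : ℤ}

theorem Zgrp_eq_of_bot (hbot : F (p - r) = ⊥) :
    Zgrp d F deg r p q = F p ⊓ cyc d deg (p + q) := by
  ext x
  simp only [Zgrp, cyc, AddSubgroup.mem_inf, AddSubgroup.mem_comap, hbot, AddSubgroup.mem_bot,
    AddMonoidHom.mem_ker]
  tauto

theorem Zgrp_le_cyc_of_bot (hbot : F (p - r) = ⊥) : Zgrp d F deg r p q ≤ cyc d deg (p + q) :=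
  (Zgrp_eq_of_bot d F deg hbot).trans_le inf_le_right

theorem Zgrp_pred_eq_of_bot (hbot : F (p - r) = ⊥) :
    Zgrp d F deg (r - 1) (p - 1) (q + 1) = F (p - 1) ⊓ cyc d deg (p + q) := by
  rw [Zgrp_eq_of_bot d F deg (by rwa [sub_sub_sub_cancel_right]), sub_add_add_cancel]

theorem Bgrp_eq_of_top (htop : F (p + r) = ⊤) :
    Bgrp d F deg r p q = F p ⊓ deg (p + q) ⊓ (deg (p + q + 1)).map d := by
  rw [Bgrp, htop, top_inf_eq]

theorem projHk_eq_iff {k : ℤ} {y z : cyc d deg k} :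
    projHk d deg k y = projHk d deg k z ↔ (y : C) - z ∈ (deg (k + 1)).map d := by
  rw [← sub_eq_zero, ← map_sub, projHk, QuotientAddGroup.mk'_apply,
    QuotientAddGroup.eq_zero_iff]
  rfl

theorem mem_FHk_iff {k : ℤ} {h : Hk d deg k} :
    h ∈ FHk d F deg p k ↔ ∃ y : cyc d deg k, (y : C) ∈ F p ∧ projHk d deg k y = h := by
  simp only [FHk, AddSubgroup.mem_map, AddSubgroup.mem_addSubgroupOf]

abbrev GrHk (p k : ℤ) :=
  FHk d F deg p k ⧸ (FHk d F deg (p - 1) k).addSubgroupOf (FHk d F deg p k)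

def toGrHk (hZ : Zgrp d F deg r p q ≤ cyc d deg (p + q)) :
    Zgrp d F deg r p q →+ GrHk d F deg p (p + q) :=
  (QuotientAddGroup.mk' _).comp <|
    ((projHk d deg (p + q)).comp (AddSubgroup.inclusion hZ)).codRestrict _ fun x =>
      (mem_FHk_iff d F deg).2 ⟨_, x.2.1.1, rfl⟩

theorem toGrHk_surjective (hZ : Zgrp d F deg r p q ≤ cyc d deg (p + q))
    (hbot : F (p - r) = ⊥) : Function.Surjective (toGrHk d F deg hZ) := by
  rintro ⟨⟨s, hs⟩⟩
  obtain ⟨y, hyF, rfl⟩ := (mem_FHk_iff d F deg).1 hs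
  have hy : (y : C) ∈ Zgrp d F deg r p q := by
    rw [Zgrp_eq_of_bot d F deg hbot]
    exact ⟨hyF, y.2⟩
  exact ⟨⟨y, hy⟩, rfl⟩

theorem toGrHk_eq_zero_iff (hZ : Zgrp d F deg r p q ≤ cyc d deg (p + q))
    (x : Zgrp d F deg r p q) :
    toGrHk d F deg hZ x = 0 ↔
      projHk d deg (p + q) (AddSubgroup.inclusion hZ x) ∈ FHk d F deg (p - 1) (p + q) := by
  rw [toGrHk, AddMonoidHom.comp_apply, QuotientAddGroup.mk'_apply, QuotientAddGroup.eq_zero_iff,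
    AddSubgroup.mem_addSubgroupOf]
  rfl

theorem ker_toGrHk (hZ : Zgrp d F deg r p q ≤ cyc d deg (p + q)) (hmono : Monotone F)
    (hbot : F (p - r) = ⊥) (htop : F (p + (r - 1)) = ⊤) :
    (toGrHk d F deg hZ).ker =
      (Zgrp d F deg (r - 1) (p - 1) (q + 1) ⊔ Bgrp d F deg (r - 1) p q).addSubgroupOf
        (Zgrp d F deg r p q) := by
  ext x
  have hx : (x : C) ∈ F p ⊓ cyc d deg (p + q) := Zgrp_eq_of_bot d F deg hbot ▸ x.2
  obtain ⟨hxF, -, hxdeg⟩ := AddSubgroup.mem_inf.1 hx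
  rw [AddMonoidHom.mem_ker, toGrHk_eq_zero_iff, mem_FHk_iff, AddSubgroup.mem_addSubgroupOf,
    AddSubgroup.mem_sup, Zgrp_pred_eq_of_bot d F deg hbot, Bgrp_eq_of_top d F deg htop]
  constructor
  · rintro ⟨y, hyF, hyx⟩
    have hF : (x : C) - y ∈ F p := sub_mem hxF (hmono (sub_le_self p zero_le_one) hyF)
    have hdeg : (x : C) - y ∈ deg (p + q) := sub_mem hxdeg y.2.2
    have hbdry : (x : C) - y ∈ (deg (p + q + 1)).map d := (projHk_eq_iff d deg).1 hyx.symm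
    exact ⟨y, ⟨hyF, y.2⟩, x - y, ⟨⟨hF, hdeg⟩, hbdry⟩, add_sub_cancel _ _⟩
  · rintro ⟨y, ⟨hyF, hy⟩, w, ⟨-, hw⟩, hyw⟩
    refine ⟨⟨y, hy⟩, hyF, (projHk_eq_iff d deg).2 ?_⟩
    rwa [AddSubgroup.coe_inclusion, ← hyw, sub_add_cancel_left, neg_mem_iff]

end

theorem Epage_stabilizes_to_graded_homology_general
    {C : Type*} [AddCommGroup C] (d : C →+ C)
    (deg : ℤ → AddSubgroup C)
    (F : ℤ → AddSubgroup C) (hmono : Monotone F)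
    (a b : ℤ) (ha : F a = ⊥) (hb : F b = ⊤)
    (p q : ℤ) :
    ∃ r0 : ℤ, ∀ r : ℤ, r0 ≤ r →
      ∃ e : Epage d F deg r p q ≃+
          (FHk d F deg p (p + q) ⧸
            (FHk d F deg (p - 1) (p + q)).addSubgroupOf (FHk d F deg p (p + q))),
        ∀ (x : C) (hx : x ∈ Zgrp d F deg r p q) (hc : x ∈ cyc d deg (p + q))
          (h1 : projHk d deg (p + q) ⟨x, hc⟩ ∈ FHk d F deg p (p + q)),
          e (QuotientAddGroup.mk ⟨x, hx⟩) =
            QuotientAddGroup.mk ⟨projHk d deg (p + q) ⟨x, hc⟩, h1⟩ := by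
  refine ⟨max (p - a) (b - p + 1), fun r hr => ?_⟩
  have hbot : F (p - r) = ⊥ := le_bot_iff.mp (ha ▸ hmono (by omega))
  have htop : F (p + (r - 1)) = ⊤ := top_le_iff.mp (hb ▸ hmono (by omega))
  have hZ := Zgrp_le_cyc_of_bot d F deg (q := q) hbot
  have hker := ker_toGrHk d F deg hZ hmono hbot htop
  exact ⟨(QuotientAddGroup.quotientAddEquivOfEq hker.symm).trans
      (QuotientAddGroup.quotientKerEquivOfSurjective _ (toGrHk_surjective d F deg hZ hbot)),
    fun _ _ _ _ => rfl⟩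

/-- If the filtration is bounded, then for each `p`, `q` and all sufficiently large `r`,
the page `E^r_{p,q}` is canonically isomorphic to
`F_p(H_{p+q}(C)) / F_{p-1}(H_{p+q}(C))`, via the map induced by the identity on
representatives. -/
theorem Epage_stabilizes_to_graded_homology
    {C : Type*} [AddCommGroup C] (d : C →+ C) (hd : ∀ x, d (d x) = 0)
    (deg : ℤ → AddSubgroup C) (hinternal : DirectSum.IsInternal deg)
    (hddeg : ∀ k, (deg k).map d ≤ deg (k - 1))
    (F : ℤ → AddSubgroup C) (hmono : Monotone F) (hdF : ∀ p, (F p).map d ≤ F p)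
    (a b : ℤ) (hab : a ≤ b) (ha : F a = ⊥) (hb : F b = ⊤)
    (p q : ℤ) :
    ∃ r0 : ℤ, ∀ r : ℤ, r0 ≤ r →
      ∃ e : Epage d F deg r p q ≃+
          (FHk d F deg p (p + q) ⧸
            (FHk d F deg (p - 1) (p + q)).addSubgroupOf (FHk d F deg p (p + q))),
        ∀ (x : C) (hx : x ∈ Zgrp d F deg r p q) (hc : x ∈ cyc d deg (p + q))
          (h1 : projHk d deg (p + q) ⟨x, hc⟩ ∈ FHk d F deg p (p + q)),
          e (QuotientAddGroup.mk ⟨x, hx⟩) =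
            QuotientAddGroup.mk ⟨projHk d deg (p + q) ⟨x, hc⟩, h1⟩ :=
  Epage_stabilizes_to_graded_homology_general d deg F hmono a b ha hb p q
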